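/- arXiv:1402.4276 — 3 statements merged into one kernel-verified Lean document; each statement's English description precedes it below -/
import Mathlib

section
/- Let Ω be a nonempty open subset of ℝⁿ and let F be a Taylorian 1-field on Ω (i.e. Γ¹(F;Ω) < +∞). Suppose there exist a, b ∈ Ω with a ≠ b such that Γ¹(F;a,b) = Γ¹(F;Ω). Then Γ¹(F;Ω) = Lip(Df;Ω). -/
noncomputable section

open scoped RealInnerProductSpace

section GammaDefs

variable {H : Type*} [NormedAddCommGroup H] [InnerProductSpace ℝ H]

/-- Evaluation of the first-degree polynomial `F(x)` at `a`:
`F(x)(a) = f_x + ⟨D_xf, a - x⟩`. -/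
def fieldEval (f : H → ℝ) (Df : H → H) (x a : H) : ℝ :=
  f x + ⟪Df x, a - x⟫

/-- `Γ¹(F; x, y) = 2 · sup_{a} |F(x)(a) - F(y)(a)| / (‖x-a‖² + ‖y-a‖²)` for `x ≠ y`. -/
def gammaPair (f : H → ℝ) (Df : H → H) (x y : H) : ℝ :=
  ⨆ a : H, 2 * |fieldEval f Df x a - fieldEval f Df y a| / (‖x - a‖ ^ 2 + ‖y - a‖ ^ 2)

/-- The set of values `Γ¹(F; x, y)` for `x ≠ y` ranging over `S`. -/
def gammaVals (f : H → ℝ) (Df : H → H) (S : Set H) : Set ℝ :=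
  {t | ∃ x ∈ S, ∃ y ∈ S, x ≠ y ∧ t = gammaPair f Df x y}

/-- `Γ¹(F; S) = sup_{x ≠ y ∈ S} Γ¹(F; x, y)` (real supremum, `0` if `S` has at most one point). -/
def gammaOn (f : H → ℝ) (Df : H → H) (S : Set H) : ℝ :=
  sSup (gammaVals f Df S)

end GammaDefs

section LipDefs

variable {α β : Type*} [NormedAddCommGroup α] [NormedAddCommGroup β]

/-- The set of difference quotients `‖g x - g y‖ / ‖x - y‖`, `x ≠ y ∈ S`. -/
def lipVals (g : α → β) (S : Set α) : Set ℝ :=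
  {t | ∃ x ∈ S, ∃ y ∈ S, x ≠ y ∧ t = ‖g x - g y‖ / ‖x - y‖}

/-- `Lip(g; S) = sup_{x ≠ y ∈ S} ‖g x - g y‖ / ‖x - y‖` (real supremum). -/
def lipOn (g : α → β) (S : Set α) : ℝ :=
  sSup (lipVals g S)

end LipDefs

section PsiDefs

variable {H : Type*} [NormedAddCommGroup H] [InnerProductSpace ℝ H]

/-- `v_{a,b} = ½(D_af + D_bf) + (κ/2)(b - a)`. -/
def vab (Df : H → H) (κ : ℝ) (a b : H) : H :=
  (1 / 2 : ℝ) • (Df a + Df b) + (κ / 2) • (b - a)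

/-- `α_{a,b}`. -/
def alphaab (f : H → ℝ) (Df : H → H) (κ : ℝ) (a b : H) : ℝ :=
  2 * κ * (f a - f b) + κ * ⟪Df a + Df b, b - a⟫
    - 1 / 2 * ‖Df a - Df b‖ ^ 2 + κ ^ 2 / 2 * ‖a - b‖ ^ 2

/-- `β_{a,b}(x)`. -/
def betaab (Df : H → H) (κ : ℝ) (a b x : H) : ℝ :=
  ‖(1 / 2 : ℝ) • (Df a - Df b) + (κ / 2) • ((2 : ℝ) • x - a - b)‖ ^ 2

/-- `r_{a,b}(x) = √(α_{a,b} + β_{a,b}(x))`. -/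
def rab (f : H → ℝ) (Df : H → H) (κ : ℝ) (a b x : H) : ℝ :=
  Real.sqrt (alphaab f Df κ a b + betaab Df κ a b x)

/-- `Λ_x = {v : ‖v - v_{a,b}‖ ≤ r_{a,b}(x) for all a, b ∈ Ω}`. -/
def Lambda (f : H → ℝ) (Df : H → H) (κ : ℝ) (Ω : Set H) (x : H) : Set H :=
  {v | ∀ a ∈ Ω, ∀ b ∈ Ω, ‖v - vab Df κ a b‖ ≤ rab f Df κ a b x}

/-- `Ψ⁺(F, x, a, v)`. -/
def PsiPlus (f : H → ℝ) (Df : H → H) (κ : ℝ) (x a v : H) : ℝ :=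
  f a + 1 / 2 * ⟪Df a + v, x - a⟫ + κ / 4 * ‖a - x‖ ^ 2 - 1 / (4 * κ) * ‖Df a - v‖ ^ 2

/-- `Ψ⁻(F, x, a, v)`. -/
def PsiMinus (f : H → ℝ) (Df : H → H) (κ : ℝ) (x a v : H) : ℝ :=
  f a + 1 / 2 * ⟪Df a + v, x - a⟫ - κ / 4 * ‖a - x‖ ^ 2 + 1 / (4 * κ) * ‖Df a - v‖ ^ 2

/-- `inf_{a ∈ Ω} Ψ⁺(F, x, a, v)`. -/
def infPsiPlus (f : H → ℝ) (Df : H → H) (κ : ℝ) (Ω : Set H) (x v : H) : ℝ :=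
  sInf {t | ∃ a ∈ Ω, t = PsiPlus f Df κ x a v}

/-- `sup_{a ∈ Ω} Ψ⁻(F, x, a, v)`. -/
def supPsiMinus (f : H → ℝ) (Df : H → H) (κ : ℝ) (Ω : Set H) (x v : H) : ℝ :=
  sSup {t | ∃ a ∈ Ω, t = PsiMinus f Df κ x a v}

/-- `u⁺(x) = sup_{v ∈ Λ_x} inf_{a ∈ Ω} Ψ⁺(F, x, a, v)`. -/
def uPlus (f : H → ℝ) (Df : H → H) (κ : ℝ) (Ω : Set H) (x : H) : ℝ :=
  sSup {t | ∃ v ∈ Lambda f Df κ Ω x, t = infPsiPlus f Df κ Ω x v}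

/-- `u⁻(x) = inf_{v ∈ Λ_x} sup_{a ∈ Ω} Ψ⁻(F, x, a, v)`. -/
def uMinus (f : H → ℝ) (Df : H → H) (κ : ℝ) (Ω : Set H) (x : H) : ℝ :=
  sInf {t | ∃ v ∈ Lambda f Df κ Ω x, t = supPsiMinus f Df κ Ω x v}

/-- `(g, Dg)` is a minimal Lipschitz extension of the 1-field `(f, Df)` of domain `Ω` to `H`. -/
def IsMLE (f : H → ℝ) (Df : H → H) (Ω : Set H) (g : H → ℝ) (Dg : H → H) : Prop :=
  (∀ x ∈ Ω, g x = f x ∧ Dg x = Df x) ∧ gammaOn g Dg Set.univ = gammaOn f Df Ω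

/-- Over extremal MLE. -/
def IsOverExtremal (f : H → ℝ) (Df : H → H) (Ω : Set H) (g₁ : H → ℝ) (Dg₁ : H → H) : Prop :=
  IsMLE f Df Ω g₁ Dg₁ ∧ ∀ g Dg, IsMLE f Df Ω g Dg → ∀ x, g x ≤ g₁ x

/-- Under extremal MLE. -/
def IsUnderExtremal (f : H → ℝ) (Df : H → H) (Ω : Set H) (g₂ : H → ℝ) (Dg₂ : H → H) : Prop :=
  IsMLE f Df Ω g₂ Dg₂ ∧ ∀ g Dg, IsMLE f Df Ω g Dg → ∀ x, g₂ x ≤ g x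

/-- Absolutely minimal Lipschitz extension. -/
def IsAMLE (f : H → ℝ) (Df : H → H) (Ω : Set H) (g : H → ℝ) (Dg : H → H) : Prop :=
  IsMLE f Df Ω g Dg ∧
    ∀ V : Set H, V.Nonempty → IsOpen V → Bornology.IsBounded V → closure V ⊆ Ωᶜ →
      gammaOn g Dg V = gammaOn g Dg (frontier V)

end PsiDefs

/-!
For `x ≠ y`, `Γ¹(F;x,y)` has a closed form: with `δ = f_x - f_y + ½⟨D_xf + D_yf, y - x⟩` it is the
nonnegative root `K` of `‖x - y‖²K² - 4|δ|K - ‖D_xf - D_yf‖² = 0`. Consequently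
`‖D_xf - D_yf‖ ≤ Γ¹(F;x,y) ‖x - y‖`, so `Lip(Df;Ω) ≤ κ := Γ¹(F;Ω)`; and `Γ¹(F;Ω) ≤ κ` says that the
gap `Q(x,y) = 4κδ + ‖D_xf - D_yf‖² - κ²‖x - y‖²` is `≤ 0` on `Ω × Ω`, with `Q(a,b) = 0` at the
extremal pair (in a suitable order).

`Q` satisfies `Q(a,y) = Q(a,b) + Q(b,y) + 2⟨D_yf - D_bf - κ(y - b), p⟩` with
`p = κ(b - a) - (D_af - D_bf)`. Moving `b` to `y = b - s p` for a small `s > 0` (possible since `Ω` is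
open), the inequalities `Q ≤ 0` at `(a,y)`, `(b,y)`, `(y,b)` force `D_yf - D_bf = κ(y - b)`, so the
Lipschitz bound `κ` is attained at `(y,b)`, or at `(a,b)` itself when `p = 0`.
-/

open Filter Topology

/-- The nonnegative root of `d²K² - 4|δ|K - W² = 0`. -/
def gammaRoot (δ W d : ℝ) : ℝ :=
  (2 * |δ| + √(4 * δ ^ 2 + W ^ 2 * d ^ 2)) / d ^ 2

section GammaRoot

variable {δ W d : ℝ}

lemma gammaRoot_nonneg : 0 ≤ gammaRoot δ W d := by
  unfold gammaRoot; positivity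

lemma gammaRoot_mul_sq (hd : d ≠ 0) :
    gammaRoot δ W d * d ^ 2 = 2 * |δ| + √(4 * δ ^ 2 + W ^ 2 * d ^ 2) := by
  unfold gammaRoot; field_simp

lemma gammaRoot_sq_mul_sq (hd : d ≠ 0) :
    gammaRoot δ W d ^ 2 * d ^ 2 = 4 * gammaRoot δ W d * |δ| + W ^ 2 := by
  have hK := gammaRoot_mul_sq (δ := δ) (W := W) hd
  have hS := Real.sq_sqrt (by positivity : 0 ≤ 4 * δ ^ 2 + W ^ 2 * d ^ 2)
  have hd2 : d ^ 2 ≠ 0 := by positivity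
  apply mul_right_cancel₀ hd2
  linear_combination (gammaRoot δ W d * d ^ 2 - 2 * |δ| + √(4 * δ ^ 2 + W ^ 2 * d ^ 2)) * hK
    - 4 * sq_abs δ + hS

lemma four_mul_abs_le_gammaRoot_mul_sq (hd : d ≠ 0) : 4 * |δ| ≤ gammaRoot δ W d * d ^ 2 := by
  have h : 2 * |δ| ≤ √(4 * δ ^ 2 + W ^ 2 * d ^ 2) :=
    Real.le_sqrt_of_sq_le (by nlinarith [sq_abs δ, sq_nonneg (W * d)])
  rw [gammaRoot_mul_sq hd]; linarith

lemma le_gammaRoot_mul (hd : 0 < d) : W ≤ gammaRoot δ W d * d := by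
  have hK := gammaRoot_sq_mul_sq (δ := δ) (W := W) hd.ne'
  have := gammaRoot_nonneg (δ := δ) (W := W) (d := d)
  nlinarith [abs_nonneg δ, mul_nonneg this hd.le]

lemma two_mul_add_le_gammaRoot_mul (hd : d ≠ 0) (τ : ℝ) :
    2 * (|δ| + W * τ) ≤ gammaRoot δ W d * (2 * τ ^ 2 + d ^ 2 / 2) := by
  have hK := gammaRoot_sq_mul_sq (δ := δ) (W := W) hd
  have hδ := four_mul_abs_le_gammaRoot_mul_sq (δ := δ) (W := W) hd
  rcases (gammaRoot_nonneg (δ := δ) (W := W) (d := d)).eq_or_lt with h0 | hpos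
  · rw [← h0] at hK hδ ⊢
    nlinarith [abs_nonneg δ]
  · nlinarith [sq_nonneg (2 * gammaRoot δ W d * τ - W)]

lemma four_mul_abs_add_sq_le_of_gammaRoot_le (hd : d ≠ 0) {κ : ℝ} (hκ : gammaRoot δ W d ≤ κ) :
    4 * κ * |δ| + W ^ 2 ≤ κ ^ 2 * d ^ 2 := by
  have hK := gammaRoot_sq_mul_sq (δ := δ) (W := W) hd
  have hδ := four_mul_abs_le_gammaRoot_mul_sq (δ := δ) (W := W) hd
  have := gammaRoot_nonneg (δ := δ) (W := W) (d := d)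
  nlinarith [mul_le_mul_of_nonneg_left hκ (sq_nonneg d)]

lemma two_mul_add_eq_gammaRoot_mul (hd : d ≠ 0) (hK : 0 < gammaRoot δ W d) :
    2 * (|δ| + W ^ 2 / (2 * gammaRoot δ W d))
      = gammaRoot δ W d * (2 * (W / (2 * gammaRoot δ W d)) ^ 2 + d ^ 2 / 2) := by
  have hsq := gammaRoot_sq_mul_sq (δ := δ) (W := W) hd
  field_simp
  linear_combination -hsq

end GammaRoot

lemma exists_abs_eq_one_abs_add_mul (δ : ℝ) {c : ℝ} (hc : 0 ≤ c) :
    ∃ σ : ℝ, |σ| = 1 ∧ |δ + σ * c| = |δ| + c := by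
  rcases le_or_gt 0 δ with hδ | hδ
  · exact ⟨1, abs_one, by rw [one_mul, abs_of_nonneg hδ, abs_of_nonneg (by linarith)]⟩
  · refine ⟨-1, by simp, ?_⟩
    rw [abs_of_neg hδ, abs_of_neg (by linarith)]
    ring

section Field

variable {H : Type*} [NormedAddCommGroup H] [InnerProductSpace ℝ H] (f : H → ℝ) (Df : H → H)

def taylorDefect (x y : H) : ℝ :=
  f x - f y + 1 / 2 * ⟪Df x + Df y, y - x⟫

lemma taylorDefect_swap (x y : H) : taylorDefect f Df y x = -taylorDefect f Df x y := by
  simp only [taylorDefect, inner_add_left, inner_sub_right]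
  ring

lemma fieldEval_sub_fieldEval (x y z : H) :
    fieldEval f Df x z - fieldEval f Df y z
      = taylorDefect f Df x y + ⟪Df x - Df y, z - midpoint ℝ x y⟫ := by
  simp only [fieldEval, taylorDefect, midpoint_eq_smul_add, invOf_eq_inv, inner_sub_left,
    inner_sub_right, inner_add_left, inner_add_right, real_inner_smul_right]
  ring

lemma norm_sub_sq_add_norm_sub_sq (x y z : H) :
    ‖x - z‖ ^ 2 + ‖y - z‖ ^ 2 = 2 * ‖z - midpoint ℝ x y‖ ^ 2 + ‖x - y‖ ^ 2 / 2 := by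
  have := EuclideanGeometry.dist_sq_add_dist_sq_eq_two_mul_dist_midpoint_sq_add_half_dist_sq z x y
  simp only [dist_eq_norm] at this
  rw [norm_sub_rev x, norm_sub_rev y, this]
  ring

lemma gammaPair_eq_gammaRoot {x y : H} (hxy : x ≠ y) :
    gammaPair f Df x y = gammaRoot (taylorDefect f Df x y) ‖Df x - Df y‖ ‖x - y‖ := by
  set δ := taylorDefect f Df x y
  set K := gammaRoot δ ‖Df x - Df y‖ ‖x - y‖
  have hd : ‖x - y‖ ≠ 0 := norm_ne_zero_iff.2 (sub_ne_zero.2 hxy)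
  have hratio : ∀ z, 2 * |fieldEval f Df x z - fieldEval f Df y z| / (‖x - z‖ ^ 2 + ‖y - z‖ ^ 2)
      = 2 * |δ + ⟪Df x - Df y, z - midpoint ℝ x y⟫|
        / (2 * ‖z - midpoint ℝ x y‖ ^ 2 + ‖x - y‖ ^ 2 / 2) := fun z => by
    rw [fieldEval_sub_fieldEval, norm_sub_sq_add_norm_sub_sq]
  have hle : ∀ z, 2 * |fieldEval f Df x z - fieldEval f Df y z| / (‖x - z‖ ^ 2 + ‖y - z‖ ^ 2)
      ≤ K := fun z => by
    rw [hratio, div_le_iff₀ (by positivity)]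
    calc 2 * |δ + ⟪Df x - Df y, z - midpoint ℝ x y⟫|
        ≤ 2 * (|δ| + ‖Df x - Df y‖ * ‖z - midpoint ℝ x y‖) := by
          gcongr
          exact (abs_add_le _ _).trans (add_le_add_right (abs_real_inner_le_norm _ _) _)
      _ ≤ _ := two_mul_add_le_gammaRoot_mul hd _
  refine le_antisymm (ciSup_le hle) ?_
  have hbdd : BddAbove (Set.range fun z =>
      2 * |fieldEval f Df x z - fieldEval f Df y z| / (‖x - z‖ ^ 2 + ‖y - z‖ ^ 2)) :=
    ⟨K, Set.forall_mem_range.2 hle⟩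
  rcases gammaRoot_nonneg.eq_or_lt with hK | hK
  · exact le_ciSup_of_le hbdd x (hK.symm.le.trans (by positivity))
  -- the supremum is attained at `z = m + (σ / 2K) (Df x - Df y)`, `σ` the sign of `δ`
  obtain ⟨σ, hσ, hσδ⟩ := exists_abs_eq_one_abs_add_mul δ
    (by positivity : 0 ≤ ‖Df x - Df y‖ ^ 2 / (2 * K))
  set v := (σ / (2 * K)) • (Df x - Df y)
  have hinner : δ + ⟪Df x - Df y, v⟫ = δ + σ * (‖Df x - Df y‖ ^ 2 / (2 * K)) := by
    rw [real_inner_smul_right, real_inner_self_eq_norm_sq]; ring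
  have hnorm : ‖v‖ = ‖Df x - Df y‖ / (2 * K) := by
    rw [norm_smul, Real.norm_eq_abs, abs_div, hσ, abs_of_pos (by positivity)]; ring
  refine le_ciSup_of_le hbdd (midpoint ℝ x y + v) (le_of_eq ?_)
  rw [hratio, add_sub_cancel_left, hinner, hσδ, hnorm, eq_div_iff (by positivity)]
  exact (two_mul_add_eq_gammaRoot_mul hd hK).symm

variable (κ : ℝ)

def taylorGap (x y : H) : ℝ :=
  4 * κ * taylorDefect f Df x y + ‖Df x - Df y‖ ^ 2 - κ ^ 2 * ‖x - y‖ ^ 2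

lemma taylorGap_self (x : H) : taylorGap f Df κ x x = 0 := by
  simp [taylorGap, taylorDefect]

lemma taylorGap_add_taylorGap_swap (x y : H) :
    taylorGap f Df κ x y + taylorGap f Df κ y x
      = 2 * (‖Df x - Df y‖ ^ 2 - κ ^ 2 * ‖x - y‖ ^ 2) := by
  rw [taylorGap, taylorGap, taylorDefect_swap, norm_sub_rev (Df y), norm_sub_rev y]
  ring

lemma taylorGap_eq_add_add_inner (a b y : H) :
    taylorGap f Df κ a y = taylorGap f Df κ a b + taylorGap f Df κ b y
      + 2 * ⟪Df y - Df b - κ • (y - b), κ • (b - a) - (Df a - Df b)⟫ := by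
  simp only [taylorGap, taylorDefect, @norm_sub_sq_real, inner_sub_left, inner_sub_right,
    inner_add_left, inner_add_right, real_inner_smul_left, real_inner_smul_right,
    real_inner_comm a, real_inner_comm b (Df a), real_inner_comm y (Df a), real_inner_comm b (Df b),
    real_inner_comm y (Df b), real_inner_comm b (Df y), real_inner_comm y (Df y),
    real_inner_comm (Df a) (Df b), real_inner_comm (Df a) (Df y), real_inner_comm (Df b) (Df y),
    real_inner_comm b y, real_inner_self_eq_norm_sq]
  ring

variable {κ}

lemma sub_eq_smul_sub_of_taylorGap_nonpos {a b y : H} {s : ℝ} (hκs : 0 ≤ κ * s)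
    (hκs₁ : 2 * κ * s ≤ 1) (hy : b - y = s • (κ • (b - a) - (Df a - Df b)))
    (hab : taylorGap f Df κ a b = 0) (hay : taylorGap f Df κ a y ≤ 0)
    (hby : taylorGap f Df κ b y ≤ 0) (hyb : taylorGap f Df κ y b ≤ 0) :
    Df y - Df b = κ • (y - b) := by
  set p := κ • (b - a) - (Df a - Df b)
  set q := Df b - Df y
  set r := Df y - Df b - κ • (y - b)
  have hr : r = (κ * s) • p - q := by
    simp only [r, q, show y - b = -(b - y) by abel, hy, smul_neg, smul_smul]; abel
  set D := ‖q‖ ^ 2 - κ ^ 2 * (s ^ 2 * ‖p‖ ^ 2)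
  have hswap : taylorGap f Df κ b y + taylorGap f Df κ y b = 2 * D := by
    rw [taylorGap_add_taylorGap_swap, hy, norm_smul, mul_pow, Real.norm_eq_abs, sq_abs]
  have hD : D ≤ 0 := by linarith
  have hrp : ⟪r, p⟫ ≤ -D := by
    have := taylorGap_eq_add_add_inner f Df κ a b y
    linarith
  have hnorm : ‖r‖ ^ 2 = D + 2 * (κ * s) * ⟪r, p⟫ := by
    rw [hr, @norm_sub_sq_real, inner_sub_left, norm_smul, real_inner_smul_left,
      real_inner_smul_left, real_inner_self_eq_norm_sq, Real.norm_eq_abs, mul_pow, sq_abs,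
      real_inner_comm q p]
    ring
  have hr0 : ‖r‖ ^ 2 ≤ 0 := by
    rw [hnorm]; nlinarith [mul_le_mul_of_nonneg_left hrp (by linarith : 0 ≤ 2 * (κ * s))]
  rw [← sub_eq_zero]
  exact norm_eq_zero.1 (pow_eq_zero_iff two_ne_zero |>.1 (le_antisymm hr0 (sq_nonneg _)))

lemma exists_norm_sub_eq_mul_norm_sub_of_taylorGap_eq_zero {Ω : Set H} (hΩ : IsOpen Ω)
    (hκ : 0 ≤ κ) (hgap : ∀ x ∈ Ω, ∀ y ∈ Ω, taylorGap f Df κ x y ≤ 0) {a b : H} (ha : a ∈ Ω)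
    (hb : b ∈ Ω) (hab : a ≠ b) (hab₀ : taylorGap f Df κ a b = 0) :
    ∃ x ∈ Ω, ∃ y ∈ Ω, x ≠ y ∧ ‖Df x - Df y‖ = κ * ‖x - y‖ := by
  set p := κ • (b - a) - (Df a - Df b)
  by_cases hp : p = 0
  · refine ⟨a, ha, b, hb, hab, ?_⟩
    rw [← (sub_eq_zero.1 hp), norm_smul, Real.norm_eq_abs, abs_of_nonneg hκ, norm_sub_rev]
  have hnear : ∀ᶠ s in 𝓝[>] (0 : ℝ), b - s • p ∈ Ω := by
    have : Tendsto (fun s : ℝ => b - s • p) (𝓝 0) (𝓝 b) := by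
      simpa using (tendsto_const_nhds (x := b)).sub ((tendsto_id (x := 𝓝 (0 : ℝ))).smul_const p)
    exact nhdsWithin_le_nhds (this.eventually (hΩ.mem_nhds hb))
  obtain ⟨s, hy, hs₀, hs₁⟩ :=
    (hnear.and (Ioo_mem_nhdsGT (by positivity : (0 : ℝ) < 1 / (2 * κ + 1)))).exists
  rw [lt_div_iff₀ (by positivity)] at hs₁
  have hDf := sub_eq_smul_sub_of_taylorGap_nonpos f Df (by positivity) (by nlinarith)
    (sub_sub_cancel b (s • p)) hab₀ (hgap a ha _ hy) (hgap b hb _ hy) (hgap _ hy b hb)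
  refine ⟨b - s • p, hy, b, hb, ?_, ?_⟩
  · simpa [hp] using hs₀.ne'
  · rw [hDf, norm_smul, Real.norm_eq_abs, abs_of_nonneg hκ]

lemma norm_sub_le_gammaPair_mul {x y : H} (hxy : x ≠ y) :
    ‖Df x - Df y‖ ≤ gammaPair f Df x y * ‖x - y‖ := by
  rw [gammaPair_eq_gammaRoot f Df hxy]
  exact le_gammaRoot_mul (norm_pos_iff.2 (sub_ne_zero.2 hxy))

lemma taylorGap_nonpos_of_gammaPair_le {x y : H} (hxy : x ≠ y) (h : gammaPair f Df x y ≤ κ) :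
    taylorGap f Df κ x y ≤ 0 := by
  rw [gammaPair_eq_gammaRoot f Df hxy] at h
  have hκ : 0 ≤ κ := gammaRoot_nonneg.trans h
  have := four_mul_abs_add_sq_le_of_gammaRoot_le (norm_ne_zero_iff.2 (sub_ne_zero.2 hxy)) h
  unfold taylorGap
  nlinarith [mul_le_mul_of_nonneg_left (le_abs_self (taylorDefect f Df x y)) hκ]

lemma taylorGap_eq_zero_or_of_gammaPair_eq {x y : H} (hxy : x ≠ y) (h : gammaPair f Df x y = κ) :
    taylorGap f Df κ x y = 0 ∨ taylorGap f Df κ y x = 0 := by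
  rw [gammaPair_eq_gammaRoot f Df hxy] at h
  have hsq := gammaRoot_sq_mul_sq (δ := taylorDefect f Df x y) (W := ‖Df x - Df y‖)
    (norm_ne_zero_iff.2 (sub_ne_zero.2 hxy))
  rw [h] at hsq
  unfold taylorGap
  rw [taylorDefect_swap f Df x y, norm_sub_rev (Df y), norm_sub_rev y]
  rcases le_or_gt 0 (taylorDefect f Df x y) with hδ | hδ
  · left; rw [abs_of_nonneg hδ] at hsq; linarith
  · right; rw [abs_of_neg hδ] at hsq; linarith

end Field

theorem stmt_0_general {n : ℕ} (Ω : Set (EuclideanSpace ℝ (Fin n)))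
    (hΩop : IsOpen Ω)
    (f : EuclideanSpace ℝ (Fin n) → ℝ)
    (Df : EuclideanSpace ℝ (Fin n) → EuclideanSpace ℝ (Fin n))
    (hTay : BddAbove (gammaVals f Df Ω))
    (a b : EuclideanSpace ℝ (Fin n)) (ha : a ∈ Ω) (hb : b ∈ Ω) (hab : a ≠ b)
    (hattain : gammaPair f Df a b = gammaOn f Df Ω) :
    gammaOn f Df Ω = lipOn Df Ω := by
  set κ := gammaOn f Df Ω
  have hle : ∀ x ∈ Ω, ∀ y ∈ Ω, x ≠ y → gammaPair f Df x y ≤ κ :=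
    fun x hx y hy hxy => le_csSup hTay ⟨x, hx, y, hy, hxy, rfl⟩
  have hκ : 0 ≤ κ := hattain ▸ gammaPair_eq_gammaRoot f Df hab ▸ gammaRoot_nonneg
  have hgap : ∀ x ∈ Ω, ∀ y ∈ Ω, taylorGap f Df κ x y ≤ 0 := by
    intro x hx y hy
    rcases eq_or_ne x y with rfl | hxy
    · rw [taylorGap_self]
    · exact taylorGap_nonpos_of_gammaPair_le f Df hxy (hle x hx y hy hxy)
  obtain ⟨x, hx, y, hy, hxy, hDf⟩ : ∃ x ∈ Ω, ∃ y ∈ Ω, x ≠ y ∧ ‖Df x - Df y‖ = κ * ‖x - y‖ := by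
    rcases taylorGap_eq_zero_or_of_gammaPair_eq f Df hab hattain with h | h
    · exact exists_norm_sub_eq_mul_norm_sub_of_taylorGap_eq_zero f Df hΩop hκ hgap ha hb hab h
    · exact exists_norm_sub_eq_mul_norm_sub_of_taylorGap_eq_zero f Df hΩop hκ hgap hb ha hab.symm h
  refine (IsGreatest.csSup_eq ⟨?_, ?_⟩).symm
  · refine ⟨x, hx, y, hy, hxy, ?_⟩
    rw [hDf, mul_div_cancel_right₀ _ (norm_ne_zero_iff.2 (sub_ne_zero.2 hxy))]
  · rintro _ ⟨x, hx, y, hy, hxy, rfl⟩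
    rw [div_le_iff₀ (norm_pos_iff.2 (sub_ne_zero.2 hxy))]
    exact (norm_sub_le_gammaPair_mul f Df hxy).trans
      (mul_le_mul_of_nonneg_right (hle x hx y hy hxy) (norm_nonneg _))

/-- If `Ω` is a nonempty open subset of `ℝⁿ`, `F = (f, Df)` is a Taylorian
1-field on `Ω`, and the supremum `Γ¹(F;Ω)` is attained at some pair `a ≠ b` in `Ω`, then
`Γ¹(F;Ω) = Lip(Df;Ω)`. -/
theorem stmt_0 {n : ℕ} (hn : 1 ≤ n) (Ω : Set (EuclideanSpace ℝ (Fin n)))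
    (hΩne : Ω.Nonempty) (hΩop : IsOpen Ω)
    (f : EuclideanSpace ℝ (Fin n) → ℝ)
    (Df : EuclideanSpace ℝ (Fin n) → EuclideanSpace ℝ (Fin n))
    (hTay : BddAbove (gammaVals f Df Ω))
    (a b : EuclideanSpace ℝ (Fin n)) (ha : a ∈ Ω) (hb : b ∈ Ω) (hab : a ≠ b)
    (hattain : gammaPair f Df a b = gammaOn f Df Ω) :
    gammaOn f Df Ω = lipOn Df Ω :=
  stmt_0_general Ω hΩop f Df hTay a b ha hb hab hattain
end
end

section
/- Let Ω be a nonempty open convex subset of ℝⁿ and let f : Ω → ℝ be differentiable on Ω with Lipschitz gradient, i.e. Lip(∇f;Ω) < +∞. Then the 1-field F associated to f, defined by f_x := f(x) and D_xf := ∇f(x) for x ∈ Ω, satisfies Γ¹(F;Ω) ≤ 2·Lip(∇f;Ω) < +∞; in particular F is Taylorian on Ω. -/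
/-! A Lipschitz gradient gives, along segments, the Taylor bound
`|f y - f x - ⟪Df x, y - x⟫| ≤ (L/2) ‖y - x‖²`. Expanding `F(x)(a) - F(y)(a)` around the
midpoint `m` of `x` and `y` leaves two such remainders and the term `⟪Df x - Df y, a - m⟫`.
With `p = (x - y)/2` and `w = a - m` this is at most `L ‖p‖² + 2 L ‖p‖ ‖w‖`, which is below
`L (2 ‖p‖² + 2 ‖w‖²) = L (‖x - a‖² + ‖y - a‖²)` by the parallelogram law. -/

noncomputable section

open scoped RealInnerProductSpace

section LipschitzGradient

variable {H : Type*} [NormedAddCommGroup H] [InnerProductSpace ℝ H] [CompleteSpace H]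
  {s : Set H} {f : H → ℝ} {Df : H → H} {L : ℝ}

theorem abs_sub_sub_inner_le_of_lipschitz_gradient (hs : Convex ℝ s)
    (hf : ∀ x ∈ s, HasGradientWithinAt f (Df x) s x)
    (hDf : ∀ a ∈ s, ∀ b ∈ s, ‖Df a - Df b‖ ≤ L * ‖a - b‖) {x y : H} (hx : x ∈ s) (hy : y ∈ s) :
    |f y - f x - ⟪Df x, y - x⟫| ≤ L / 2 * ‖y - x‖ ^ 2 := by
  set γ : ℝ → H := fun t => x + t • (y - x)
  have hγs : Set.MapsTo γ (Set.Icc 0 1) s := fun t ht => hs.add_smul_sub_mem hx hy ht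
  have hγ (t : ℝ) : HasDerivAt γ (y - x) t := by
    simpa only [one_smul] using ((hasDerivAt_id' t).smul_const (y - x)).const_add x
  set φ : ℝ → ℝ := fun t => f (γ t) - f x - t * ⟪Df x, y - x⟫
  have hφ (t : ℝ) (ht : t ∈ Set.Icc 0 1) :
      HasDerivWithinAt φ ⟪Df (γ t) - Df x, y - x⟫ (Set.Icc 0 1) t := by
    have hfγ : HasDerivWithinAt (fun t => f (γ t)) ⟪Df (γ t), y - x⟫ (Set.Icc 0 1) t :=
      (hf _ (hγs ht)).hasFDerivWithinAt.comp_hasDerivWithinAt t (hγ t).hasDerivWithinAt hγs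
    rw [inner_sub_left]
    exact (hfγ.sub_const (f x)).sub (hasDerivAt_mul_const _).hasDerivWithinAt
  have hφ' (t : ℝ) (ht : t ∈ Set.Ico 0 1) :
      ‖⟪Df (γ t) - Df x, y - x⟫‖ ≤ L * ‖y - x‖ ^ 2 * t := by
    have hγx : ‖γ t - x‖ = t * ‖y - x‖ := by
      simp [γ, norm_smul, abs_of_nonneg ht.1]
    calc ‖⟪Df (γ t) - Df x, y - x⟫‖ ≤ ‖Df (γ t) - Df x‖ * ‖y - x‖ := norm_inner_le_norm _ _
      _ ≤ L * (t * ‖y - x‖) * ‖y - x‖ := by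
        gcongr
        rw [← hγx]
        exact hDf _ (hγs (Set.Ico_subset_Icc_self ht)) _ hx
      _ = L * ‖y - x‖ ^ 2 * t := by ring
  have hB (t : ℝ) : HasDerivAt (fun t => L / 2 * ‖y - x‖ ^ 2 * t ^ 2) (L * ‖y - x‖ ^ 2 * t) t :=
    ((hasDerivAt_pow 2 t).const_mul _).congr_deriv (by push_cast; ring)
  have := image_norm_le_of_norm_deriv_right_le_deriv_boundary
    (fun t ht => (hφ t ht).continuousWithinAt)
    (fun t ht => (hφ t (Set.Ico_subset_Icc_self ht)).mono_of_mem_nhdsWithin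
      (Icc_mem_nhdsGE_of_mem ht))
    (by simp [φ, γ]) hB hφ' (Set.right_mem_Icc.2 zero_le_one)
  simpa [φ, γ] using this

theorem abs_fieldEval_sub_fieldEval_le (hs : Convex ℝ s)
    (hf : ∀ x ∈ s, HasGradientWithinAt f (Df x) s x)
    (hDf : ∀ a ∈ s, ∀ b ∈ s, ‖Df a - Df b‖ ≤ L * ‖a - b‖) (hL : 0 ≤ L)
    {x y : H} (hx : x ∈ s) (hy : y ∈ s) (a : H) :
    |fieldEval f Df x a - fieldEval f Df y a| ≤ L * (‖x - a‖ ^ 2 + ‖y - a‖ ^ 2) := by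
  set m : H := (2⁻¹ : ℝ) • (x + y)
  have hm : m ∈ s := by
    simpa only [m, smul_add] using hs hx hy (by norm_num) (by norm_num) (by norm_num)
  set p : H := (2⁻¹ : ℝ) • (x - y)
  set w : H := a - m
  have hmx : m - x = -p := by module
  have hmy : m - y = p := by module
  have hxy : ‖x - y‖ = 2 * ‖p‖ := by
    rw [show x - y = (2 : ℝ) • p by module, norm_smul, Real.norm_two]
  have hden : ‖x - a‖ ^ 2 + ‖y - a‖ ^ 2 = 2 * (‖p‖ ^ 2 + ‖w‖ ^ 2) := by
    rw [show x - a = p - w by module, show y - a = -(p + w) by module, norm_neg, add_comm]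
    exact parallelogram_law_with_norm ℝ p w
  have hTx := abs_sub_sub_inner_le_of_lipschitz_gradient hs hf hDf hx hm
  have hTy := abs_sub_sub_inner_le_of_lipschitz_gradient hs hf hDf hy hm
  rw [hmx, norm_neg] at hTx
  rw [hmy] at hTy
  have hinner : |⟪Df x - Df y, w⟫| ≤ L * (2 * ‖p‖) * ‖w‖ :=
    (abs_real_inner_le_norm _ _).trans (by gcongr; rw [← hxy]; exact hDf x hx y hy)
  have hsplit : fieldEval f Df x a - fieldEval f Df y a =
      -(f m - f x - ⟪Df x, -p⟫) + (f m - f y - ⟪Df y, p⟫) + ⟪Df x - Df y, w⟫ := by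
    rw [← hmx, ← hmy]
    simp only [fieldEval, w, inner_sub_left, inner_sub_right]
    ring
  rw [hsplit, hden]
  calc |-(f m - f x - ⟪Df x, -p⟫) + (f m - f y - ⟪Df y, p⟫) + ⟪Df x - Df y, w⟫|
      ≤ L / 2 * ‖p‖ ^ 2 + L / 2 * ‖p‖ ^ 2 + L * (2 * ‖p‖) * ‖w‖ := by
        refine (abs_add_le _ _).trans (add_le_add ((abs_add_le _ _).trans ?_) hinner)
        rw [abs_neg]
        exact add_le_add hTx hTy
    _ ≤ L * (2 * (‖p‖ ^ 2 + ‖w‖ ^ 2)) := by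
        nlinarith [mul_nonneg hL (sq_nonneg (‖p‖ - ‖w‖)), mul_nonneg hL (sq_nonneg ‖w‖)]

theorem gammaPair_le (hs : Convex ℝ s) (hf : ∀ x ∈ s, HasGradientWithinAt f (Df x) s x)
    (hDf : ∀ a ∈ s, ∀ b ∈ s, ‖Df a - Df b‖ ≤ L * ‖a - b‖) (hL : 0 ≤ L)
    {x y : H} (hx : x ∈ s) (hy : y ∈ s) :
    gammaPair f Df x y ≤ 2 * L :=
  ciSup_le fun a => div_le_of_le_mul₀ (by positivity) (by positivity) <| by
    rw [mul_assoc]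
    exact mul_le_mul_of_nonneg_left (abs_fieldEval_sub_fieldEval_le hs hf hDf hL hx hy a)
      zero_le_two

end LipschitzGradient

section Lip

variable {α β : Type*} [NormedAddCommGroup α] [NormedAddCommGroup β] {g : α → β} {S : Set α}

theorem lipOn_nonneg : 0 ≤ lipOn g S :=
  Real.sSup_nonneg <| by
    rintro _ ⟨x, -, y, -, -, rfl⟩
    positivity

theorem norm_sub_le_lipOn_mul (hg : BddAbove (lipVals g S)) {x y : α} (hx : x ∈ S) (hy : y ∈ S) :
    ‖g x - g y‖ ≤ lipOn g S * ‖x - y‖ := by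
  rcases eq_or_ne x y with rfl | hxy
  · simp
  · rw [← div_le_iff₀ (norm_sub_pos_iff.2 hxy)]
    exact le_csSup hg ⟨x, hx, y, hy, hxy, rfl⟩

end Lip

theorem stmt_3_general {n : ℕ} (Ω : Set (EuclideanSpace ℝ (Fin n)))
    (hΩconv : Convex ℝ Ω)
    (f : EuclideanSpace ℝ (Fin n) → ℝ)
    (Df : EuclideanSpace ℝ (Fin n) → EuclideanSpace ℝ (Fin n))
    (hdiff : ∀ x ∈ Ω, HasGradientAt f (Df x) x)
    (hLip : BddAbove (lipVals Df Ω)) :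
    gammaOn f Df Ω ≤ 2 * lipOn Df Ω ∧ BddAbove (gammaVals f Df Ω) := by
  have hpair : ∀ t ∈ gammaVals f Df Ω, t ≤ 2 * lipOn Df Ω := by
    rintro _ ⟨x, hx, y, hy, -, rfl⟩
    exact gammaPair_le hΩconv (fun z hz => (hdiff z hz).hasFDerivAt.hasFDerivWithinAt)
      (fun a ha b hb => norm_sub_le_lipOn_mul hLip ha hb) lipOn_nonneg hx hy
  exact ⟨Real.sSup_le hpair (mul_nonneg zero_le_two lipOn_nonneg), 2 * lipOn Df Ω, hpair⟩

/-- If `Ω ⊆ ℝⁿ` is nonempty, open and convex, `f : Ω → ℝ` is differentiable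
on `Ω` with gradient `Df` satisfying `Lip(Df;Ω) < +∞`, then the associated 1-field `F` (given
by `f_x := f x` and `D_xf := Df x`) satisfies `Γ¹(F;Ω) ≤ 2 Lip(Df;Ω) < +∞`; in particular `F`
is Taylorian on `Ω`. -/
theorem stmt_3 {n : ℕ} (hn : 1 ≤ n) (Ω : Set (EuclideanSpace ℝ (Fin n)))
    (hΩne : Ω.Nonempty) (hΩop : IsOpen Ω) (hΩconv : Convex ℝ Ω)
    (f : EuclideanSpace ℝ (Fin n) → ℝ)
    (Df : EuclideanSpace ℝ (Fin n) → EuclideanSpace ℝ (Fin n))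
    (hdiff : ∀ x ∈ Ω, HasGradientAt f (Df x) x)
    (hLip : BddAbove (lipVals Df Ω)) :
    gammaOn f Df Ω ≤ 2 * lipOn Df Ω ∧ BddAbove (gammaVals f Df Ω) :=
  stmt_3_general Ω hΩconv f Df hdiff hLip
end
end

section
/- Let Ω ⊆ ℝⁿ be nonempty, let F be a Taylorian 1-field on Ω and set κ := Γ¹(F;Ω). Then for all a, b ∈ Ω one has α_{a,b} ≥ 0, and for every x ∈ ℝⁿ the set Λ_x is nonempty, convex and compact. -/
noncomputable section

open scoped RealInnerProductSpace

/-!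
For `a, b ∈ Ω` the Taylor inequality `|F(a)(t) - F(b)(t)| ≤ κ/2 (‖a - t‖² + ‖b - t‖²)` and the
identity `2κ (κ/2 (‖a - t‖² + ‖b - t‖²) + F(a)(t) - F(b)(t)) = α_{a,b} + 2‖κ (t - (a+b)/2) +
(D_af - D_bf)/2‖²` give `α_{a,b} ≥ 0`: for `κ > 0` choose `t` so that the square vanishes; for
`κ = 0` the Taylor inequality forces `D_af = D_bf`.

`Λ_x` is an intersection of closed balls, so only its nonemptiness needs an idea. One can write
`v_{a,b} = S_a + T_b`, `β_{a,b}(x) = ‖S_a - T_b‖²` and `α_{a,b} = A_a - B_b - 2‖S_a - T_b‖²`, with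
`S, A` depending only on `a` and `T, B` only on `b`: the balls have centres `c_{pq} = S_p + T_q`
and squared radii `ρ_{pq} = A_p - B_q - ‖u_{pq}‖²`, `u_{pq} = S_p - T_q`. Using `α ≥ 0` at the
crossed pairs `(p, q')`, `(p', q)`, any `v` with `‖v - c_i‖² - ρ_i ≥ m` for `i = (p, q), (p', q')`
satisfies `m + ⟪u_{pq}, u_{p'q'}⟫ ≤ ⟪v - c_{pq}, v - c_{p'q'}⟫`. For finitely many balls let `v`
minimise `m = max_i (‖v - c_i‖² - ρ_i)`; then `v` is a convex combination of the active centres,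
and averaging with these weights gives `m + ‖Σ w_i u_i‖² ≤ ‖Σ w_i (v - c_i)‖² = 0`. Compactness of
the balls passes to arbitrary families.
-/

open Filter Topology

section

variable {E : Type*} [NormedAddCommGroup E] {ι : Type*}

theorem norm_sub_sq_le_two_mul (a b t : E) : ‖a - b‖ ^ 2 ≤ 2 * (‖a - t‖ ^ 2 + ‖b - t‖ ^ 2) := by
  have := norm_sub_le_norm_sub_add_norm_sub a t b
  rw [norm_sub_rev t b] at this
  nlinarith [sq_nonneg (‖a - t‖ - ‖b - t‖), norm_nonneg (a - b)]

theorem exists_forall_sup'_norm_sub_sq_le [ProperSpace E] {s : Finset ι} (hs : s.Nonempty)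
    (c : ι → E) (ρ : ι → ℝ) :
    ∃ v : E, ∀ w : E,
      s.sup' hs (fun i => ‖v - c i‖ ^ 2 - ρ i) ≤ s.sup' hs (fun i => ‖w - c i‖ ^ 2 - ρ i) := by
  obtain ⟨i₀, hi₀⟩ := hs
  have hcoercive : Tendsto (fun w => ‖w - c i₀‖ ^ 2 - ρ i₀) (cocompact E) atTop := by
    rw [← Metric.cobounded_eq_cocompact]
    exact tendsto_atTop_add_const_right _ _ ((tendsto_pow_atTop two_ne_zero).comp
      (tendsto_norm_cobounded_atTop.comp (tendsto_sub_const_cobounded _)))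
  refine (Continuous.finset_sup'_apply _ fun i _ => by fun_prop).exists_forall_le ?_
  exact tendsto_atTop_mono (fun w => Finset.le_sup' (fun i => ‖w - c i‖ ^ 2 - ρ i) hi₀) hcoercive

variable [InnerProductSpace ℝ E]

theorem exists_inner_sub_pos_of_notMem {K : Set E} (hconv : Convex ℝ K) (hcompl : IsComplete K)
    {v : E} (hv : v ∉ K) : ∃ d : E, ∀ z ∈ K, 0 < ⟪d, z - v⟫ := by
  rcases K.eq_empty_or_nonempty with rfl | hne
  · exact ⟨0, by simp⟩
  obtain ⟨p, hpK, hp⟩ := exists_norm_eq_iInf_of_complete_convex hne hcompl hconv v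
  have hproj := (norm_eq_iInf_iff_real_inner_le_zero hconv hpK).1 hp
  have hpv : 0 < ‖p - v‖ := norm_pos_iff.2 (sub_ne_zero.2 (ne_of_mem_of_not_mem hpK hv))
  refine ⟨p - v, fun z hz => ?_⟩
  have hsplit : ⟪p - v, z - v⟫ = ‖p - v‖ ^ 2 - ⟪v - p, z - p⟫ := by
    rw [← sub_add_sub_cancel z p v, inner_add_right, real_inner_self_eq_norm_sq, ← neg_sub v p,
      inner_neg_left]
    ring
  nlinarith [hproj z hz]

theorem eventually_norm_add_smul_sub_sq_lt {v c d : E} (h : ⟪v - c, d⟫ < 0) :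
    ∀ᶠ t in 𝓝[>] (0 : ℝ), ‖v + t • d - c‖ ^ 2 < ‖v - c‖ ^ 2 := by
  have hslope : ∀ᶠ t in 𝓝 (0 : ℝ), 2 * ⟪v - c, d⟫ + t * ‖d‖ ^ 2 < 0 :=
    ((continuous_const.add (continuous_id.mul continuous_const)).tendsto' 0 (2 * ⟪v - c, d⟫)
      (by simp)).eventually_lt_const (by linarith)
  filter_upwards [nhdsWithin_le_nhds hslope, self_mem_nhdsWithin] with t hneg (ht : 0 < t)
  have hexpand : ‖v + t • d - c‖ ^ 2 = ‖v - c‖ ^ 2 + t * (2 * ⟪v - c, d⟫ + t * ‖d‖ ^ 2) := by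
    rw [add_sub_right_comm, norm_add_sq_real, inner_smul_right, norm_smul, mul_pow,
      Real.norm_eq_abs, sq_abs]
    ring
  rw [hexpand]
  nlinarith

-- If not, a small step from `v` towards the hull lowers every active term, while the others
-- stay below the maximum by continuity.
theorem mem_convexHull_active_of_forall_sup'_le {s : Finset ι} (hs : s.Nonempty) (c : ι → E)
    (ρ : ι → ℝ) {v : E}
    (hv : ∀ w : E,
      s.sup' hs (fun i => ‖v - c i‖ ^ 2 - ρ i) ≤ s.sup' hs (fun i => ‖w - c i‖ ^ 2 - ρ i)) :
    v ∈ convexHull ℝ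
      (c '' {i | i ∈ s ∧ ‖v - c i‖ ^ 2 - ρ i = s.sup' hs (fun i => ‖v - c i‖ ^ 2 - ρ i)}) := by
  set m := s.sup' hs (fun i => ‖v - c i‖ ^ 2 - ρ i)
  set act := {i | i ∈ s ∧ ‖v - c i‖ ^ 2 - ρ i = m}
  have hfin : (c '' act).Finite := (s.finite_toSet.subset fun i hi => hi.1).image c
  by_contra hvK
  obtain ⟨d, hd⟩ := exists_inner_sub_pos_of_notMem (convex_convexHull ℝ _)
    (hfin.isCompact_convexHull (𝕜 := ℝ)).isComplete hvK
  have hdescent : ∀ i ∈ s, ∀ᶠ t in 𝓝[>] (0 : ℝ), ‖v + t • d - c i‖ ^ 2 - ρ i < m := by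
    intro i hi
    by_cases hiact : ‖v - c i‖ ^ 2 - ρ i = m
    · have hdi : ⟪v - c i, d⟫ < 0 := by
        have := hd (c i) (subset_convexHull ℝ _ ⟨i, ⟨hi, hiact⟩, rfl⟩)
        rw [← neg_sub, inner_neg_left, real_inner_comm]
        linarith
      filter_upwards [eventually_norm_add_smul_sub_sq_lt hdi] with t ht
      linarith
    · have hlt : ‖v - c i‖ ^ 2 - ρ i < m :=
        lt_of_le_of_ne (Finset.le_sup' (fun i => ‖v - c i‖ ^ 2 - ρ i) hi) hiact
      have hcont : Continuous fun t : ℝ => ‖v + t • d - c i‖ ^ 2 - ρ i := by fun_prop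
      exact nhdsWithin_le_nhds
        (hcont.continuousAt.eventually_lt continuousAt_const (by simpa using hlt))
  obtain ⟨t, ht⟩ := (eventually_all_finset s |>.2 hdescent).exists
  exact (hv (v + t • d)).not_gt ((Finset.sup'_lt_iff hs).2 ht)

theorem nonpos_of_mem_convexHull_image {A : Set ι} {z u : ι → E} {v : E} {m : ℝ}
    (hv : v ∈ convexHull ℝ (z '' A))
    (h : ∀ i ∈ A, ∀ j ∈ A, m + ⟪u i, u j⟫ ≤ ⟪v - z i, v - z j⟫) : m ≤ 0 := by
  obtain ⟨J, _, w, y, hw₀, hw₁, hy, hwy⟩ := mem_convexHull_iff_exists_fintype.1 hv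
  choose idx hidxA hidx using hy
  have hgram : ∀ x : J → E,
      ⟪∑ k, w k • x k, ∑ l, w l • x l⟫ = ∑ k, ∑ l, w k * w l * ⟪x k, x l⟫ := fun x => by
    simp only [sum_inner, inner_sum, real_inner_smul_left, real_inner_smul_right]
    exact Finset.sum_comm.trans
      (Finset.sum_congr rfl fun k _ => Finset.sum_congr rfl fun l _ => by ring)
  have hcentred : ∑ k, w k • (v - z (idx k)) = 0 := by
    simp only [hidx, smul_sub, Finset.sum_sub_distrib, ← Finset.sum_smul, hw₁, one_smul, hwy,
      sub_self]
  calc m ≤ m + ‖∑ k, w k • u (idx k)‖ ^ 2 := le_add_of_nonneg_right (sq_nonneg _)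
    _ = ∑ k, ∑ l, w k * w l * (m + ⟪u (idx k), u (idx l)⟫) := by
      simp only [← real_inner_self_eq_norm_sq, hgram, mul_add, Finset.sum_add_distrib,
        ← Finset.sum_mul, ← Finset.mul_sum, hw₁, mul_one, one_mul]
    _ ≤ ∑ k, ∑ l, w k * w l * ⟪v - z (idx k), v - z (idx l)⟫ := by
      gcongr with k _ l _
      · exact mul_nonneg (hw₀ k) (hw₀ l)
      · exact h _ (hidxA k) _ (hidxA l)
    _ = 0 := by rw [← hgram, hcentred, inner_zero_left]

theorem add_inner_le_inner_sub_sub {v s₁ t₁ s₂ t₂ : E} {a₁ b₁ a₂ b₂ m : ℝ}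
    (h₁ : m ≤ ‖v - (s₁ + t₁)‖ ^ 2 + ‖s₁ - t₁‖ ^ 2 - (a₁ - b₁))
    (h₂ : m ≤ ‖v - (s₂ + t₂)‖ ^ 2 + ‖s₂ - t₂‖ ^ 2 - (a₂ - b₂))
    (h₁₂ : 2 * ‖s₁ - t₂‖ ^ 2 ≤ a₁ - b₂) (h₂₁ : 2 * ‖s₂ - t₁‖ ^ 2 ≤ a₂ - b₁) :
    m + ⟪s₁ - t₁, s₂ - t₂⟫ ≤ ⟪v - (s₁ + t₁), v - (s₂ + t₂)⟫ := by
  have hid : 2 * ⟪v - (s₁ + t₁), v - (s₂ + t₂)⟫ - 2 * ⟪s₁ - t₁, s₂ - t₂⟫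
      = (‖v - (s₁ + t₁)‖ ^ 2 + ‖s₁ - t₁‖ ^ 2) + (‖v - (s₂ + t₂)‖ ^ 2 + ‖s₂ - t₂‖ ^ 2)
        - 2 * ‖s₁ - t₂‖ ^ 2 - 2 * ‖s₂ - t₁‖ ^ 2 := by
    simp only [← real_inner_self_eq_norm_sq, inner_sub_left, inner_sub_right, inner_add_left,
      inner_add_right, real_inner_comm]
    ring
  linarith

theorem exists_forall_norm_sub_sq_add_le_of_finset [ProperSpace E] {s : Finset ι}
    (hs : s.Nonempty) (S T : ι → E) (A B : ι → ℝ)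
    (hAB : ∀ p ∈ s, ∀ q ∈ s, 2 * ‖S p - T q‖ ^ 2 ≤ A p - B q) :
    ∃ v : E, ∀ p ∈ s, ∀ q ∈ s, ‖v - (S p + T q)‖ ^ 2 + ‖S p - T q‖ ^ 2 ≤ A p - B q := by
  let c : ι × ι → E := fun i => S i.1 + T i.2
  let ρ : ι × ι → ℝ := fun i => A i.1 - B i.2 - ‖S i.1 - T i.2‖ ^ 2
  have hss := hs.product hs
  obtain ⟨v, hv⟩ := exists_forall_sup'_norm_sub_sq_le hss c ρ
  suffices hm : (s ×ˢ s).sup' hss (fun i => ‖v - c i‖ ^ 2 - ρ i) ≤ 0 by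
    refine ⟨v, fun p hp q hq => ?_⟩
    have := (Finset.le_sup' (fun i => ‖v - c i‖ ^ 2 - ρ i)
      (Finset.mem_product.2 ⟨hp, hq⟩ : (p, q) ∈ s ×ˢ s)).trans hm
    simp only [c, ρ] at this
    linarith
  refine nonpos_of_mem_convexHull_image (u := fun i => S i.1 - T i.2)
    (mem_convexHull_active_of_forall_sup'_le hss c ρ hv) ?_
  rintro ⟨p₁, q₁⟩ ⟨hi, hi'⟩ ⟨p₂, q₂⟩ ⟨hj, hj'⟩
  obtain ⟨hp₁, hq₁⟩ := Finset.mem_product.1 hi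
  obtain ⟨hp₂, hq₂⟩ := Finset.mem_product.1 hj
  exact add_inner_le_inner_sub_sub (by simp only [c, ρ] at hi' ⊢; linarith)
    (by simp only [c, ρ] at hj' ⊢; linarith) (hAB p₁ hp₁ q₂ hq₂) (hAB p₂ hp₂ q₁ hq₁)

theorem exists_forall_norm_sub_sq_add_le [ProperSpace E] {Ω : Set ι} (hΩ : Ω.Nonempty)
    (S T : ι → E) (A B : ι → ℝ) (hAB : ∀ p ∈ Ω, ∀ q ∈ Ω, 2 * ‖S p - T q‖ ^ 2 ≤ A p - B q) :
    ∃ v : E, ∀ p ∈ Ω, ∀ q ∈ Ω, ‖v - (S p + T q)‖ ^ 2 + ‖S p - T q‖ ^ 2 ≤ A p - B q := by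
  classical
  obtain ⟨p₀, hp₀⟩ := hΩ
  let K : Ω × Ω → Set E := fun i =>
    {v | ‖v - (S i.1 + T i.2)‖ ^ 2 + ‖S i.1 - T i.2‖ ^ 2 ≤ A i.1 - B i.2}
  have hclosed : ∀ i, IsClosed (K i) := fun i => isClosed_le (by fun_prop) continuous_const
  have hcompact : IsCompact (K (⟨p₀, hp₀⟩, ⟨p₀, hp₀⟩)) := by
    refine (isCompact_closedBall (S p₀ + T p₀) √(A p₀ - B p₀)).of_isClosed_subset (hclosed _)
      fun v hv => ?_
    simp only [K, Set.mem_ofPred_eq] at hv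
    rw [Metric.mem_closedBall, dist_eq_norm]
    exact Real.le_sqrt_of_sq_le (by nlinarith [sq_nonneg ‖S p₀ - T p₀‖])
  obtain ⟨v, -, hv⟩ := hcompact.inter_iInter_nonempty K hclosed fun u => by
    let s : Finset ι := insert p₀ (u.image (fun i => i.1.1) ∪ u.image (fun i => i.2.1))
    have hsΩ : ∀ p ∈ s, p ∈ Ω := by
      simp only [s, Finset.mem_insert, Finset.mem_union, Finset.mem_image]
      rintro p (rfl | ⟨i, -, rfl⟩ | ⟨i, -, rfl⟩)
      exacts [hp₀, i.1.2, i.2.2]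
    obtain ⟨v, hv⟩ := exists_forall_norm_sub_sq_add_le_of_finset (Finset.insert_nonempty _ _)
      S T A B fun p hp q hq => hAB p (hsΩ p hp) q (hsΩ q hq)
    refine ⟨v, hv _ (Finset.mem_insert_self _ _) _ (Finset.mem_insert_self _ _),
      Set.mem_iInter₂.2 fun i hi => hv _ ?_ _ ?_⟩
    · exact Finset.mem_insert_of_mem (Finset.mem_union_left _ (Finset.mem_image_of_mem _ hi))
    · exact Finset.mem_insert_of_mem (Finset.mem_union_right _ (Finset.mem_image_of_mem _ hi))
  exact ⟨v, fun p hp q hq => Set.mem_iInter.1 hv (⟨p, hp⟩, ⟨q, hq⟩)⟩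

variable {f : E → ℝ} {Df : E → E} {Ω : Set E}

theorem gammaOn_nonneg (f : E → ℝ) (Df : E → E) (Ω : Set E) : 0 ≤ gammaOn f Df Ω :=
  Real.sSup_nonneg fun _ ⟨_, _, _, _, _, h⟩ => h ▸ Real.iSup_nonneg fun _ => by positivity

theorem bddAbove_range_abs_fieldEval_sub_div {a b : E} (hab : a ≠ b) :
    BddAbove (Set.range fun t =>
      2 * |fieldEval f Df a t - fieldEval f Df b t| / (‖a - t‖ ^ 2 + ‖b - t‖ ^ 2)) := by
  set K := 2 * |f a - f b| + ‖Df a‖ ^ 2 + ‖Df b‖ ^ 2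
  have hδ : 0 < ‖a - b‖ ^ 2 := by positivity [sub_ne_zero.2 hab]
  refine ⟨2 * K / ‖a - b‖ ^ 2 + 1, Set.forall_mem_range.2 fun t => ?_⟩
  have hD := norm_sub_sq_le_two_mul a b t
  have hnum : 2 * |fieldEval f Df a t - fieldEval f Df b t| ≤ K + (‖a - t‖ ^ 2 + ‖b - t‖ ^ 2) := by
    have ha := abs_real_inner_le_norm (Df a) (t - a)
    have hb := abs_real_inner_le_norm (Df b) (t - b)
    rw [norm_sub_rev] at ha hb
    have hN : |fieldEval f Df a t - fieldEval f Df b t|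
        ≤ |f a - f b| + ‖Df a‖ * ‖a - t‖ + ‖Df b‖ * ‖b - t‖ := by
      rw [abs_le] at ha hb ⊢
      constructor <;> simp only [fieldEval] <;>
        linarith [le_abs_self (f a - f b), neg_abs_le (f a - f b)]
    nlinarith [sq_nonneg (‖Df a‖ - ‖a - t‖), sq_nonneg (‖Df b‖ - ‖b - t‖)]
  rw [div_le_iff₀ (by linarith)]
  have hK : K ≤ 2 * K / ‖a - b‖ ^ 2 * (‖a - t‖ ^ 2 + ‖b - t‖ ^ 2) := by
    rw [div_mul_eq_mul_div, le_div_iff₀ hδ]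
    nlinarith [show 0 ≤ K by positivity]
  linarith

theorem abs_fieldEval_sub_le (hTay : BddAbove (gammaVals f Df Ω)) {a b : E} (ha : a ∈ Ω)
    (hb : b ∈ Ω) (t : E) :
    |fieldEval f Df a t - fieldEval f Df b t|
      ≤ gammaOn f Df Ω / 2 * (‖a - t‖ ^ 2 + ‖b - t‖ ^ 2) := by
  rcases eq_or_ne a b with rfl | hab
  · simpa using mul_nonneg (div_nonneg (gammaOn_nonneg f Df Ω) zero_le_two) (by positivity)
  have hD : 0 < ‖a - t‖ ^ 2 + ‖b - t‖ ^ 2 := by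
    nlinarith [norm_sub_sq_le_two_mul a b t, norm_pos_iff.2 (sub_ne_zero.2 hab)]
  have hquot : 2 * |fieldEval f Df a t - fieldEval f Df b t| / (‖a - t‖ ^ 2 + ‖b - t‖ ^ 2)
      ≤ gammaOn f Df Ω := (le_ciSup (bddAbove_range_abs_fieldEval_sub_div hab) t).trans
    (le_csSup hTay ⟨a, ha, b, hb, hab, rfl⟩)
  rw [div_le_iff₀ hD] at hquot
  linarith

theorem alphaab_add_two_mul_norm_sq (f : E → ℝ) (Df : E → E) (κ : ℝ) (a b t : E) :
    alphaab f Df κ a b + 2 * ‖κ • (t - (1 / 2 : ℝ) • (a + b)) + (1 / 2 : ℝ) • (Df a - Df b)‖ ^ 2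
      = 2 * κ * (κ / 2 * (‖a - t‖ ^ 2 + ‖b - t‖ ^ 2)
        + (fieldEval f Df a t - fieldEval f Df b t)) := by
  simp only [fieldEval, alphaab, ← real_inner_self_eq_norm_sq, inner_add_left, inner_add_right,
    inner_sub_left, inner_sub_right, real_inner_smul_right, real_inner_comm]
  ring

theorem eq_of_forall_fieldEval_eq {a b : E} (h : ∀ t, fieldEval f Df a t = fieldEval f Df b t) :
    Df a = Df b := by
  have h₁ := h (b + (Df a - Df b))
  have h₂ := h b
  rw [← sub_eq_zero, ← inner_self_eq_zero (𝕜 := ℝ)]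
  simp only [fieldEval, inner_sub_left, inner_sub_right, inner_add_right, real_inner_comm]
    at h₁ h₂ ⊢
  linarith

theorem alphaab_nonneg (hTay : BddAbove (gammaVals f Df Ω)) {a b : E} (ha : a ∈ Ω)
    (hb : b ∈ Ω) : 0 ≤ alphaab f Df (gammaOn f Df Ω) a b := by
  have htaylor := abs_fieldEval_sub_le hTay ha hb
  rcases (gammaOn_nonneg f Df Ω).eq_or_lt with hκ | hκ
  · have hDf : Df a = Df b := eq_of_forall_fieldEval_eq fun t => by
      simpa [← hκ, sub_eq_zero] using htaylor t
    simp [alphaab, ← hκ, hDf]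
  · set κ := gammaOn f Df Ω
    set t := (1 / 2 : ℝ) • (a + b) - (2 * κ)⁻¹ • (Df a - Df b)
    have hsq : κ • (t - (1 / 2 : ℝ) • (a + b)) + (1 / 2 : ℝ) • (Df a - Df b) = 0 := by
      rw [sub_sub_cancel_left, smul_neg, smul_smul, mul_inv_rev, ← mul_assoc,
        mul_inv_cancel₀ hκ.ne', one_mul, ← sub_eq_neg_add, sub_eq_zero, one_div]
    have key := alphaab_add_two_mul_norm_sq f Df κ a b t
    rw [hsq, norm_zero] at key
    nlinarith [neg_abs_le (fieldEval f Df a t - fieldEval f Df b t), htaylor t]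

theorem Lambda_eq_biInter_closedBall (f : E → ℝ) (Df : E → E) (κ : ℝ) (Ω : Set E) (x : E) :
    Lambda f Df κ Ω x
      = ⋂ a ∈ Ω, ⋂ b ∈ Ω, Metric.closedBall (vab Df κ a b) (rab f Df κ a b x) := by
  ext v
  simp [Lambda, dist_eq_norm]

theorem convex_Lambda (f : E → ℝ) (Df : E → E) (κ : ℝ) (Ω : Set E) (x : E) :
    Convex ℝ (Lambda f Df κ Ω x) := by
  rw [Lambda_eq_biInter_closedBall]
  exact convex_iInter₂ fun a _ => convex_iInter₂ fun b _ => convex_closedBall _ _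

theorem isCompact_Lambda [ProperSpace E] (f : E → ℝ) (Df : E → E) (κ : ℝ) (hΩ : Ω.Nonempty)
    (x : E) : IsCompact (Lambda f Df κ Ω x) := by
  obtain ⟨a, ha⟩ := hΩ
  refine (isCompact_closedBall (vab Df κ a a) (rab f Df κ a a x)).of_isClosed_subset ?_
    fun v hv => by simpa [dist_eq_norm] using hv a ha a ha
  rw [Lambda_eq_biInter_closedBall]
  exact isClosed_biInter fun a _ => isClosed_biInter fun b _ => Metric.isClosed_closedBall

theorem Lambda_nonempty [ProperSpace E] {κ : ℝ} (hΩ : Ω.Nonempty)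
    (hα : ∀ a ∈ Ω, ∀ b ∈ Ω, 0 ≤ alphaab f Df κ a b) (x : E) :
    (Lambda f Df κ Ω x).Nonempty := by
  let S : E → E := fun a => (1 / 2 : ℝ) • Df a + (κ / 2) • (x - a)
  let T : E → E := fun b => (1 / 2 : ℝ) • Df b - (κ / 2) • (x - b)
  let A : E → ℝ := fun a => κ ^ 2 * ‖a - x‖ ^ 2 + 2 * κ * fieldEval f Df a x
  let B : E → ℝ := fun b => 2 * κ * fieldEval f Df b x - κ ^ 2 * ‖b - x‖ ^ 2
  have hvab : ∀ a b, vab Df κ a b = S a + T b := fun a b => by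
    simp only [vab, S, T]
    module
  have hβ : ∀ a b, betaab Df κ a b x = ‖S a - T b‖ ^ 2 := fun a b => by
    simp only [betaab, S, T]
    congr 2
    module
  have hαAB : ∀ a b, alphaab f Df κ a b = A a - B b - 2 * ‖S a - T b‖ ^ 2 := fun a b => by
    simp only [alphaab, A, B, S, T, fieldEval, ← real_inner_self_eq_norm_sq, inner_add_left,
      inner_add_right, inner_sub_left, inner_sub_right, real_inner_smul_right, real_inner_comm]
    ring
  obtain ⟨v, hv⟩ := exists_forall_norm_sub_sq_add_le hΩ S T A B fun a ha b hb => by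
    linarith [hα a ha b hb, hαAB a b]
  refine ⟨v, fun a ha b hb => ?_⟩
  rw [rab, hvab, hαAB, hβ]
  exact Real.le_sqrt_of_sq_le (by linarith [hv a ha b hb])

end

theorem stmt_7_general {n : ℕ} (Ω : Set (EuclideanSpace ℝ (Fin n)))
    (hΩne : Ω.Nonempty)
    (f : EuclideanSpace ℝ (Fin n) → ℝ)
    (Df : EuclideanSpace ℝ (Fin n) → EuclideanSpace ℝ (Fin n))
    (hTay : BddAbove (gammaVals f Df Ω)) :
    (∀ a ∈ Ω, ∀ b ∈ Ω, 0 ≤ alphaab f Df (gammaOn f Df Ω) a b) ∧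
      ∀ x : EuclideanSpace ℝ (Fin n),
        (Lambda f Df (gammaOn f Df Ω) Ω x).Nonempty ∧
        Convex ℝ (Lambda f Df (gammaOn f Df Ω) Ω x) ∧
        IsCompact (Lambda f Df (gammaOn f Df Ω) Ω x) := by
  have hα : ∀ a ∈ Ω, ∀ b ∈ Ω, 0 ≤ alphaab f Df (gammaOn f Df Ω) a b :=
    fun _ ha _ hb => alphaab_nonneg hTay ha hb
  exact ⟨hα, fun x => ⟨Lambda_nonempty hΩne hα x, convex_Lambda f Df _ Ω x,
    isCompact_Lambda f Df _ hΩne x⟩⟩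

/-- Let `F = (f, Df)` be a Taylorian 1-field on a nonempty `Ω ⊆ ℝⁿ` and set
`κ := Γ¹(F;Ω)`. Then `α_{a,b} ≥ 0` for all `a, b ∈ Ω`, and for every `x ∈ ℝⁿ` the set `Λ_x`
is nonempty, convex and compact. -/
theorem stmt_7 {n : ℕ} (hn : 1 ≤ n) (Ω : Set (EuclideanSpace ℝ (Fin n)))
    (hΩne : Ω.Nonempty)
    (f : EuclideanSpace ℝ (Fin n) → ℝ)
    (Df : EuclideanSpace ℝ (Fin n) → EuclideanSpace ℝ (Fin n))
    (hTay : BddAbove (gammaVals f Df Ω)) :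
    (∀ a ∈ Ω, ∀ b ∈ Ω, 0 ≤ alphaab f Df (gammaOn f Df Ω) a b) ∧
      ∀ x : EuclideanSpace ℝ (Fin n),
        (Lambda f Df (gammaOn f Df Ω) Ω x).Nonempty ∧
        Convex ℝ (Lambda f Df (gammaOn f Df Ω) Ω x) ∧
        IsCompact (Lambda f Df (gammaOn f Df Ω) Ω x) :=
  stmt_7_general Ω hΩne f Df hTay
end
end
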